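/- If C is a semi-additive category endowed with a symmetric monoidal structure whose tensor product is additive (monoid-homomorphic) in each variable, then the group completion C⁻¹ carries a unique symmetric monoidal structure additive in each variable such that the canonical functor α : C → C⁻¹ is strict symmetric monoidal. -/

import Mathlib

open CategoryTheory CategoryTheory.Limits CategoryTheory.MonoidalCategory

universe v u v' u'

/-- A category enriched in commutative monoids: each Hom-set is a commutative additive
monoid, and composition is bilinear and compatible with the zero morphisms. -/
class CMonEnriched (C : Type u) [Category.{v} C] where
  homMonoid : ∀ x y : C, AddCommMonoid (x ⟶ y)
  add_comp : ∀ ⦃x y z : C⦄ (f g : x ⟶ y) (h : y ⟶ z), (f + g) ≫ h = f ≫ h + g ≫ h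
  comp_add : ∀ ⦃x y z : C⦄ (f : x ⟶ y) (g h : y ⟶ z), f ≫ (g + h) = f ≫ g + f ≫ h
  zero_comp : ∀ ⦃x y z : C⦄ (h : y ⟶ z), (0 : x ⟶ y) ≫ h = 0
  comp_zero : ∀ ⦃x y z : C⦄ (f : x ⟶ y), f ≫ (0 : y ⟶ z) = 0

attribute [instance] CMonEnriched.homMonoid

/-- The zero-morphism structure underlying a commutative-monoid enrichment. -/
instance (priority := 100) CMonEnriched.toHasZeroMorphisms (C : Type u) [Category.{v} C]
    [CMonEnriched C] : HasZeroMorphisms C where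
  zero _ _ := ⟨0⟩
  comp_zero f _ := CMonEnriched.comp_zero f
  zero_comp _ _ _ h := CMonEnriched.zero_comp h

/-!
Every morphism of `D` is a difference `α.map f - α.map f'`, and `α.map f = α.map f'` exactly when
`f + h = f' + h` for some `h`. Hence an additive map between Hom-monoids of `C`, such as whiskering
by a fixed object, extends to an additive map between the corresponding Hom-groups of `D`.
Identifying the objects of `D` with those of `C` through the bijection `α.obj`, this gives the
whiskerings of `D`, while the associator, unitors and braiding are the images of those of `C`.
Every axiom of a symmetric monoidal category then reduces, by additivity, to the same axiom in `C`
applied to morphisms `α.map f`. Uniqueness: an additive structure for which `α` is strict agrees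
with this one on every `α.map f`, hence on every difference of them.
-/

namespace CategoryTheory

class MonoidalCMonEnriched (C : Type u) [Category.{v} C] [CMonEnriched C]
    [MonoidalCategory C] : Prop where
  whiskerLeft_add : ∀ (x : C) {y z : C} (f g : y ⟶ z), x ◁ (f + g) = x ◁ f + x ◁ g
  add_whiskerRight : ∀ {y z : C} (f g : y ⟶ z) (x : C), (f + g) ▷ x = f ▷ x + g ▷ x

namespace MonoidalCMonEnriched

variable {C : Type u} [Category.{v} C] [CMonEnriched C] [MonoidalCategory C]
  [MonoidalCMonEnriched C]

@[simps]
def whiskerLeftAddHom (x : C) (y z : C) : (y ⟶ z) →ₙ+ (x ⊗ y ⟶ x ⊗ z) :=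
  ⟨(x ◁ ·), whiskerLeft_add x⟩

@[simps]
def whiskerRightAddHom (y z : C) (x : C) : (y ⟶ z) →ₙ+ (y ⊗ x ⟶ z ⊗ x) :=
  ⟨(· ▷ x), (add_whiskerRight · · x)⟩

end MonoidalCMonEnriched

namespace Functor

variable {C : Type u} [Category.{v} C] {D : Type u'} [Category.{v'} D]

def mapOfEq (F : C ⥤ D) {x y : C} {X Y : D} (p : X = F.obj x) (q : Y = F.obj y) (f : x ⟶ y) :
    X ⟶ Y :=
  eqToHom p ≫ F.map f ≫ eqToHom q.symm

variable (F : C ⥤ D)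

theorem map_eq_mapOfEq {x y : C} (f : x ⟶ y) : F.map f = F.mapOfEq rfl rfl f := by
  simp [mapOfEq]

@[simp]
theorem mapOfEq_comp {x y z : C} {X Y Z : D} (p : X = F.obj x) (q : Y = F.obj y)
    (r : Z = F.obj z) (f : x ⟶ y) (g : y ⟶ z) :
    F.mapOfEq p q f ≫ F.mapOfEq q r g = F.mapOfEq p r (f ≫ g) := by
  subst p q r; simp [mapOfEq]

@[simp]
theorem mapOfEq_id {x : C} {X : D} (p : X = F.obj x) : F.mapOfEq p p (𝟙 x) = 𝟙 X := by
  subst p; simp [mapOfEq]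

@[simp]
theorem eqToHom_comp_mapOfEq {x y : C} {W X Y : D} (h : W = X) (p : X = F.obj x)
    (q : Y = F.obj y) (f : x ⟶ y) : eqToHom h ≫ F.mapOfEq p q f = F.mapOfEq (h.trans p) q f := by
  subst h; simp

@[simp]
theorem mapOfEq_comp_eqToHom {x y : C} {X Y Z : D} (p : X = F.obj x) (q : Y = F.obj y)
    (h : Y = Z) (f : x ⟶ y) : F.mapOfEq p q f ≫ eqToHom h = F.mapOfEq p (h.symm.trans q) f := by
  subst h; simp

@[simps]
def mapIsoOfEq {x y : C} {X Y : D} (p : X = F.obj x) (q : Y = F.obj y) (e : x ≅ y) : X ≅ Y where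
  hom := F.mapOfEq p q e.hom
  inv := F.mapOfEq q p e.inv

end Functor

theorem MonoidalCategory.ext_of_eqToHom {D : Type u'} [Category.{v'} D]
    {M M' : MonoidalCategory D}
    (h_obj : ∀ X Y : D, M.tensorObj X Y = M'.tensorObj X Y)
    (h_whiskerLeft : ∀ (X : D) {Y Z : D} (g : Y ⟶ Z),
      M.whiskerLeft X g = eqToHom (h_obj X Y) ≫ M'.whiskerLeft X g ≫ eqToHom (h_obj X Z).symm)
    (h_whiskerRight : ∀ {Y Z : D} (g : Y ⟶ Z) (X : D),
      M.whiskerRight g X = eqToHom (h_obj Y X) ≫ M'.whiskerRight g X ≫ eqToHom (h_obj Z X).symm)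
    (h_unit : M.tensorUnit = M'.tensorUnit)
    (h_associator : ∀ X Y Z : D, (M.associator X Y Z).hom =
      eqToHom (by rw [h_obj, h_obj]) ≫ (M'.associator X Y Z).hom ≫ eqToHom (by rw [h_obj, h_obj]))
    (h_leftUnitor : ∀ X : D,
      (M.leftUnitor X).hom = eqToHom (by rw [h_obj, h_unit]) ≫ (M'.leftUnitor X).hom)
    (h_rightUnitor : ∀ X : D,
      (M.rightUnitor X).hom = eqToHom (by rw [h_obj, h_unit]) ≫ (M'.rightUnitor X).hom) :
    M = M' := by
  obtain @⟨⟨tensorObj, whiskerLeft, whiskerRight, tensorHom, tensorUnit, associator, leftUnitor,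
    rightUnitor⟩, tensorHom_def⟩ := M
  obtain @⟨⟨tensorObj', whiskerLeft', whiskerRight', tensorHom', tensorUnit', associator',
    leftUnitor', rightUnitor'⟩, tensorHom_def'⟩ := M'
  obtain rfl : tensorObj = tensorObj' := funext₂ h_obj
  obtain rfl : tensorUnit = tensorUnit' := h_unit
  simp only [eqToHom_refl, Category.id_comp, Category.comp_id] at *
  obtain rfl : @whiskerLeft = @whiskerLeft' := by
    funext X Y Z g; exact h_whiskerLeft X g
  obtain rfl : @whiskerRight = @whiskerRight' := by
    funext Y Z g X; exact h_whiskerRight g X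
  obtain rfl : @tensorHom = @tensorHom' := by
    funext X₁ Y₁ X₂ Y₂ f g; exact (tensorHom_def f g).trans (tensorHom_def' f g).symm
  obtain rfl : associator = associator' := by
    funext X Y Z; ext; exact h_associator X Y Z
  obtain rfl : leftUnitor = leftUnitor' := by
    funext X; ext; exact h_leftUnitor X
  obtain rfl : rightUnitor = rightUnitor' := by
    funext X; ext; exact h_rightUnitor X
  rfl

theorem SymmetricCategory.ext_of_braiding_hom {D : Type u'} [Category.{v'} D]
    [MonoidalCategory D] {S S' : SymmetricCategory D}
    (h : ∀ X Y : D, (S.braiding X Y).hom = (S'.braiding X Y).hom) : S = S' := by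
  obtain @⟨⟨braiding⟩⟩ := S
  obtain @⟨⟨braiding'⟩⟩ := S'
  obtain rfl : braiding = braiding' := funext₂ fun X Y => Iso.ext (h X Y)
  rfl

structure IsGroupCompletion {C : Type u} [Category.{v} C] [CMonEnriched C]
    {D : Type u'} [Category.{v'} D] [Preadditive D] (α : C ⥤ D) : Prop where
  bijective_obj : Function.Bijective α.obj
  map_add : ∀ {x y : C} (f g : x ⟶ y), α.map (f + g) = α.map f + α.map g
  exists_eq_map_sub_map :
    ∀ {x y : C} (g : α.obj x ⟶ α.obj y), ∃ f f' : x ⟶ y, g = α.map f - α.map f'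
  map_eq_map_iff : ∀ {x y : C} (f f' : x ⟶ y), α.map f = α.map f' ↔ ∃ h : x ⟶ y, f + h = f' + h

namespace IsGroupCompletion

variable {C : Type u} [Category.{v} C] [CMonEnriched C]
  {D : Type u'} [Category.{v'} D] [Preadditive D] {α : C ⥤ D} (H : IsGroupCompletion α)
include H

theorem map_sub_map_eq_of_addHom {a b c d : C} (T : (a ⟶ b) →ₙ+ (c ⟶ d)) {f f' g g' : a ⟶ b}
    (h : α.map f - α.map f' = α.map g - α.map g') :
    α.map (T f) - α.map (T f') = α.map (T g) - α.map (T g') := by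
  rw [sub_eq_sub_iff_add_eq_add, ← H.map_add, ← H.map_add] at h ⊢
  obtain ⟨k, hk⟩ := (H.map_eq_map_iff _ _).1 h
  rw [← T.map_add, ← T.map_add, H.map_eq_map_iff]
  exact ⟨T k, by rw [← T.map_add, ← T.map_add, hk]⟩

theorem exists_addMonoidHom_map_sub_map {a b c d : C} (T : (a ⟶ b) →ₙ+ (c ⟶ d)) :
    ∃ L : (α.obj a ⟶ α.obj b) →+ (α.obj c ⟶ α.obj d),
      ∀ f f' : a ⟶ b, L (α.map f - α.map f') = α.map (T f) - α.map (T f') := by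
  choose p p' hp using @H.exists_eq_map_sub_map a b
  have eval {g : α.obj a ⟶ α.obj b} {f f' : a ⟶ b} (hg : g = α.map f - α.map f') :
      α.map (T (p g)) - α.map (T (p' g)) = α.map (T f) - α.map (T f') :=
    H.map_sub_map_eq_of_addHom T ((hp g).symm.trans hg)
  refine ⟨AddMonoidHom.mk' (fun g => α.map (T (p g)) - α.map (T (p' g))) fun g g' => ?_,
    fun f f' => eval rfl⟩
  have hsum : g + g' = α.map (p g + p g') - α.map (p' g + p' g') := by
    rw [H.map_add, H.map_add]
    conv_lhs => rw [hp g, hp g']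
    abel
  rw [eval (hp g), eval (hp g'), eval hsum, T.map_add, T.map_add, H.map_add, H.map_add]
  abel

noncomputable def liftHom {a b c d : C} (T : (a ⟶ b) →ₙ+ (c ⟶ d)) :
    (α.obj a ⟶ α.obj b) →+ (α.obj c ⟶ α.obj d) :=
  (H.exists_addMonoidHom_map_sub_map T).choose

theorem liftHom_map_sub {a b c d : C} (T : (a ⟶ b) →ₙ+ (c ⟶ d)) (f f' : a ⟶ b) :
    H.liftHom T (α.map f - α.map f') = α.map (T f) - α.map (T f') :=
  (H.exists_addMonoidHom_map_sub_map T).choose_spec f f'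

theorem liftHom_map {a b c d : C} (T : (a ⟶ b) →ₙ+ (c ⟶ d)) (f : a ⟶ b) :
    H.liftHom T (α.map f) = α.map (T f) := by
  simpa only [H.map_add, T.map_add, add_sub_cancel_right] using H.liftHom_map_sub T (f + f) f

noncomputable def preimage (X : D) : C := Function.surjInv H.bijective_obj.2 X

theorem obj_preimage (X : D) : α.obj (H.preimage X) = X :=
  Function.surjInv_eq H.bijective_obj.2 X

theorem preimage_eq {X : D} {x : C} (p : X = α.obj x) : H.preimage X = x :=
  H.bijective_obj.1 (by rw [obj_preimage, p])

section Monoidal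

variable [MonoidalCategory C]

noncomputable def tensorObj (X Y : D) : D := α.obj (H.preimage X ⊗ H.preimage Y)

theorem tensorObj_eq {X Y : D} {x y : C} (p : X = α.obj x) (q : Y = α.obj y) :
    H.tensorObj X Y = α.obj (x ⊗ y) := by
  rw [tensorObj, H.preimage_eq p, H.preimage_eq q]

theorem map_tensorObj (x y : C) : α.obj (x ⊗ y) = H.tensorObj (α.obj x) (α.obj y) :=
  (H.tensorObj_eq rfl rfl).symm

noncomputable def associator (X Y Z : D) :
    H.tensorObj (H.tensorObj X Y) Z ≅ H.tensorObj X (H.tensorObj Y Z) :=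
  α.mapIsoOfEq (H.tensorObj_eq (H.tensorObj_eq (H.obj_preimage X).symm (H.obj_preimage Y).symm)
      (H.obj_preimage Z).symm)
    (H.tensorObj_eq (H.obj_preimage X).symm
      (H.tensorObj_eq (H.obj_preimage Y).symm (H.obj_preimage Z).symm))
    (α_ (H.preimage X) (H.preimage Y) (H.preimage Z))

theorem associator_eq {X Y Z : D} {x y z : C} (p : X = α.obj x) (q : Y = α.obj y)
    (r : Z = α.obj z) :
    H.associator X Y Z = α.mapIsoOfEq (H.tensorObj_eq (H.tensorObj_eq p q) r)
      (H.tensorObj_eq p (H.tensorObj_eq q r)) (α_ x y z) := by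
  obtain rfl := H.preimage_eq p
  obtain rfl := H.preimage_eq q
  obtain rfl := H.preimage_eq r
  rfl

theorem map_associator_hom (x y z : C) :
    α.map (α_ x y z).hom = eqToHom (H.tensorObj_eq (H.tensorObj_eq rfl rfl) rfl).symm ≫
      (H.associator (α.obj x) (α.obj y) (α.obj z)).hom ≫
        eqToHom (H.tensorObj_eq rfl (H.tensorObj_eq rfl rfl)) := by
  simp [H.associator_eq rfl rfl rfl, α.map_eq_mapOfEq]

noncomputable def leftUnitor (X : D) : H.tensorObj (α.obj (𝟙_ C)) X ≅ X :=
  α.mapIsoOfEq (H.tensorObj_eq rfl (H.obj_preimage X).symm) (H.obj_preimage X).symm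
    (λ_ (H.preimage X))

theorem leftUnitor_eq {X : D} {x : C} (p : X = α.obj x) :
    H.leftUnitor X = α.mapIsoOfEq (H.tensorObj_eq rfl p) p (λ_ x) := by
  obtain rfl := H.preimage_eq p
  rfl

theorem map_leftUnitor_hom (x : C) :
    α.map (λ_ x).hom = eqToHom (H.tensorObj_eq rfl rfl).symm ≫ (H.leftUnitor (α.obj x)).hom := by
  simp [H.leftUnitor_eq rfl, α.map_eq_mapOfEq]

noncomputable def rightUnitor (X : D) : H.tensorObj X (α.obj (𝟙_ C)) ≅ X :=
  α.mapIsoOfEq (H.tensorObj_eq (H.obj_preimage X).symm rfl) (H.obj_preimage X).symm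
    (ρ_ (H.preimage X))

theorem rightUnitor_eq {X : D} {x : C} (p : X = α.obj x) :
    H.rightUnitor X = α.mapIsoOfEq (H.tensorObj_eq p rfl) p (ρ_ x) := by
  obtain rfl := H.preimage_eq p
  rfl

theorem map_rightUnitor_hom (x : C) :
    α.map (ρ_ x).hom = eqToHom (H.tensorObj_eq rfl rfl).symm ≫ (H.rightUnitor (α.obj x)).hom := by
  simp [H.rightUnitor_eq rfl, α.map_eq_mapOfEq]

section Braided

variable [BraidedCategory C]

noncomputable def braiding (X Y : D) : H.tensorObj X Y ≅ H.tensorObj Y X :=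
  α.mapIsoOfEq rfl rfl (β_ (H.preimage X) (H.preimage Y))

theorem braiding_eq {X Y : D} {x y : C} (p : X = α.obj x) (q : Y = α.obj y) :
    H.braiding X Y = α.mapIsoOfEq (H.tensorObj_eq p q) (H.tensorObj_eq q p) (β_ x y) := by
  obtain rfl := H.preimage_eq p
  obtain rfl := H.preimage_eq q
  rfl

theorem map_braiding_hom (x y : C) :
    α.map (β_ x y).hom = eqToHom (H.map_tensorObj x y) ≫ (H.braiding (α.obj x) (α.obj y)).hom ≫
      eqToHom (H.map_tensorObj y x).symm := by
  simp [H.braiding_eq rfl rfl, α.map_eq_mapOfEq]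

end Braided

theorem braiding_hom_comp_braiding_hom [SymmetricCategory C] (X Y : D) :
    (H.braiding X Y).hom ≫ (H.braiding Y X).hom = 𝟙 (H.tensorObj X Y) := by
  obtain ⟨x, rfl⟩ := H.bijective_obj.2 X
  obtain ⟨y, rfl⟩ := H.bijective_obj.2 Y
  simp only [H.braiding_eq rfl rfl, Functor.mapIsoOfEq_hom, Functor.mapOfEq_comp,
    SymmetricCategory.symmetry, Functor.mapOfEq_id]

theorem tensorObj_eq_of_map_tensorObj [MonoidalCategory D]
    (hto : ∀ x y : C, α.obj (x ⊗ y) = α.obj x ⊗ α.obj y) (X Y : D) :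
    X ⊗ Y = H.tensorObj X Y := by
  obtain ⟨x, rfl⟩ := H.bijective_obj.2 X
  obtain ⟨y, rfl⟩ := H.bijective_obj.2 Y
  rw [← hto, H.tensorObj_eq rfl rfl]

theorem associator_hom_eq_of_map_associator_hom [MonoidalCategory D]
    (hto : ∀ x y : C, α.obj (x ⊗ y) = α.obj x ⊗ α.obj y)
    (hassoc : ∀ x y z : C, α.map (α_ x y z).hom =
      eqToHom (by rw [hto, hto]) ≫ (α_ (α.obj x) (α.obj y) (α.obj z)).hom ≫
        eqToHom (by rw [hto, hto]))
    (X Y Z : D) :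
    (α_ X Y Z).hom =
      eqToHom (by simp only [H.tensorObj_eq_of_map_tensorObj hto]) ≫ (H.associator X Y Z).hom ≫
        eqToHom (by simp only [H.tensorObj_eq_of_map_tensorObj hto]) := by
  obtain ⟨x, rfl⟩ := H.bijective_obj.2 X
  obtain ⟨y, rfl⟩ := H.bijective_obj.2 Y
  obtain ⟨z, rfl⟩ := H.bijective_obj.2 Z
  simp [H.associator_eq rfl rfl rfl, Functor.mapOfEq, hassoc]

theorem leftUnitor_hom_eq_of_map_leftUnitor_hom [MonoidalCategory D]
    (hto : ∀ x y : C, α.obj (x ⊗ y) = α.obj x ⊗ α.obj y) (hunit : α.obj (𝟙_ C) = 𝟙_ D)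
    (hleft : ∀ x : C, α.map (λ_ x).hom = eqToHom (by rw [hto, hunit]) ≫ (λ_ (α.obj x)).hom)
    (X : D) :
    (λ_ X).hom = eqToHom (by rw [H.tensorObj_eq_of_map_tensorObj hto, hunit]) ≫
      (H.leftUnitor X).hom := by
  obtain ⟨x, rfl⟩ := H.bijective_obj.2 X
  simp [H.leftUnitor_eq rfl, Functor.mapOfEq, hleft]

theorem rightUnitor_hom_eq_of_map_rightUnitor_hom [MonoidalCategory D]
    (hto : ∀ x y : C, α.obj (x ⊗ y) = α.obj x ⊗ α.obj y) (hunit : α.obj (𝟙_ C) = 𝟙_ D)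
    (hright : ∀ x : C, α.map (ρ_ x).hom = eqToHom (by rw [hto, hunit]) ≫ (ρ_ (α.obj x)).hom)
    (X : D) :
    (ρ_ X).hom = eqToHom (by rw [H.tensorObj_eq_of_map_tensorObj hto, hunit]) ≫
      (H.rightUnitor X).hom := by
  obtain ⟨x, rfl⟩ := H.bijective_obj.2 X
  simp [H.rightUnitor_eq rfl, Functor.mapOfEq, hright]

variable [MonoidalCMonEnriched C]

noncomputable def whiskerLeft (X : D) {Y Z : D} (g : Y ⟶ Z) :
    H.tensorObj X Y ⟶ H.tensorObj X Z :=
  H.liftHom (MonoidalCMonEnriched.whiskerLeftAddHom (H.preimage X) _ _)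
    (eqToHom (H.obj_preimage Y) ≫ g ≫ eqToHom (H.obj_preimage Z).symm)

noncomputable def whiskerRight {Y Z : D} (g : Y ⟶ Z) (X : D) :
    H.tensorObj Y X ⟶ H.tensorObj Z X :=
  H.liftHom (MonoidalCMonEnriched.whiskerRightAddHom _ _ (H.preimage X))
    (eqToHom (H.obj_preimage Y) ≫ g ≫ eqToHom (H.obj_preimage Z).symm)

theorem whiskerLeft_add (X : D) {Y Z : D} (g g' : Y ⟶ Z) :
    H.whiskerLeft X (g + g') = H.whiskerLeft X g + H.whiskerLeft X g' := by
  simp only [whiskerLeft, Preadditive.add_comp, Preadditive.comp_add, AddMonoidHom.map_add]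
  rfl

theorem whiskerLeft_sub (X : D) {Y Z : D} (g g' : Y ⟶ Z) :
    H.whiskerLeft X (g - g') = H.whiskerLeft X g - H.whiskerLeft X g' := by
  simp only [whiskerLeft, Preadditive.sub_comp, Preadditive.comp_sub, AddMonoidHom.map_sub]
  rfl

theorem whiskerRight_add {Y Z : D} (g g' : Y ⟶ Z) (X : D) :
    H.whiskerRight (g + g') X = H.whiskerRight g X + H.whiskerRight g' X := by
  simp only [whiskerRight, Preadditive.add_comp, Preadditive.comp_add, AddMonoidHom.map_add]
  rfl

theorem whiskerRight_sub {Y Z : D} (g g' : Y ⟶ Z) (X : D) :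
    H.whiskerRight (g - g') X = H.whiskerRight g X - H.whiskerRight g' X := by
  simp only [whiskerRight, Preadditive.sub_comp, Preadditive.comp_sub, AddMonoidHom.map_sub]
  rfl

theorem whiskerLeft_mapOfEq {X Y Z : D} {x y z : C} (p : X = α.obj x) (q : Y = α.obj y)
    (r : Z = α.obj z) (f : y ⟶ z) :
    H.whiskerLeft X (α.mapOfEq q r f) =
      α.mapOfEq (H.tensorObj_eq p q) (H.tensorObj_eq p r) (x ◁ f) := by
  obtain rfl := H.preimage_eq p
  obtain rfl := H.preimage_eq q
  obtain rfl := H.preimage_eq r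
  simp [whiskerLeft, Functor.mapOfEq, H.liftHom_map, tensorObj]
  exact (Category.id_comp _).symm

theorem whiskerRight_mapOfEq {X Y Z : D} {x y z : C} (p : X = α.obj x) (q : Y = α.obj y)
    (r : Z = α.obj z) (f : y ⟶ z) :
    H.whiskerRight (α.mapOfEq q r f) X =
      α.mapOfEq (H.tensorObj_eq q p) (H.tensorObj_eq r p) (f ▷ x) := by
  obtain rfl := H.preimage_eq p
  obtain rfl := H.preimage_eq q
  obtain rfl := H.preimage_eq r
  simp [whiskerRight, Functor.mapOfEq, H.liftHom_map, tensorObj]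
  exact (Category.id_comp _).symm

theorem whiskerLeft_id (X Y : D) : H.whiskerLeft X (𝟙 Y) = 𝟙 (H.tensorObj X Y) := by
  obtain ⟨x, rfl⟩ := H.bijective_obj.2 X
  obtain ⟨y, rfl⟩ := H.bijective_obj.2 Y
  rw [← α.map_id, α.map_eq_mapOfEq, H.whiskerLeft_mapOfEq rfl, MonoidalCategory.whiskerLeft_id,
    α.mapOfEq_id]

theorem id_whiskerRight (X Y : D) : H.whiskerRight (𝟙 X) Y = 𝟙 (H.tensorObj X Y) := by
  obtain ⟨x, rfl⟩ := H.bijective_obj.2 X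
  obtain ⟨y, rfl⟩ := H.bijective_obj.2 Y
  rw [← α.map_id, α.map_eq_mapOfEq, H.whiskerRight_mapOfEq rfl,
    MonoidalCategory.id_whiskerRight, α.mapOfEq_id]

theorem whiskerLeft_comp (X : D) {Y Z W : D} (g : Y ⟶ Z) (g' : Z ⟶ W) :
    H.whiskerLeft X (g ≫ g') = H.whiskerLeft X g ≫ H.whiskerLeft X g' := by
  obtain ⟨x, rfl⟩ := H.bijective_obj.2 X
  obtain ⟨y, rfl⟩ := H.bijective_obj.2 Y
  obtain ⟨z, rfl⟩ := H.bijective_obj.2 Z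
  obtain ⟨w, rfl⟩ := H.bijective_obj.2 W
  obtain ⟨u, u', rfl⟩ := H.exists_eq_map_sub_map g
  obtain ⟨v, v', rfl⟩ := H.exists_eq_map_sub_map g'
  simp only [α.map_eq_mapOfEq, Preadditive.sub_comp, Preadditive.comp_sub, H.whiskerLeft_sub,
    H.whiskerLeft_mapOfEq rfl, Functor.mapOfEq_comp, MonoidalCategory.whiskerLeft_comp]

theorem comp_whiskerRight {Y Z W : D} (g : Y ⟶ Z) (g' : Z ⟶ W) (X : D) :
    H.whiskerRight (g ≫ g') X = H.whiskerRight g X ≫ H.whiskerRight g' X := by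
  obtain ⟨x, rfl⟩ := H.bijective_obj.2 X
  obtain ⟨y, rfl⟩ := H.bijective_obj.2 Y
  obtain ⟨z, rfl⟩ := H.bijective_obj.2 Z
  obtain ⟨w, rfl⟩ := H.bijective_obj.2 W
  obtain ⟨u, u', rfl⟩ := H.exists_eq_map_sub_map g
  obtain ⟨v, v', rfl⟩ := H.exists_eq_map_sub_map g'
  simp only [α.map_eq_mapOfEq, Preadditive.sub_comp, Preadditive.comp_sub, H.whiskerRight_sub,
    H.whiskerRight_mapOfEq rfl, Functor.mapOfEq_comp, MonoidalCategory.comp_whiskerRight]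

theorem whisker_exchange {W X Y Z : D} (f : W ⟶ X) (g : Y ⟶ Z) :
    H.whiskerRight f Y ≫ H.whiskerLeft X g = H.whiskerLeft W g ≫ H.whiskerRight f Z := by
  obtain ⟨w, rfl⟩ := H.bijective_obj.2 W
  obtain ⟨x, rfl⟩ := H.bijective_obj.2 X
  obtain ⟨y, rfl⟩ := H.bijective_obj.2 Y
  obtain ⟨z, rfl⟩ := H.bijective_obj.2 Z
  obtain ⟨u, u', rfl⟩ := H.exists_eq_map_sub_map f
  obtain ⟨v, v', rfl⟩ := H.exists_eq_map_sub_map g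
  simp only [α.map_eq_mapOfEq, H.whiskerRight_sub, H.whiskerLeft_sub, H.whiskerRight_mapOfEq rfl,
    H.whiskerLeft_mapOfEq rfl, Preadditive.sub_comp, Preadditive.comp_sub, Functor.mapOfEq_comp,
    MonoidalCategory.whisker_exchange]
  abel

theorem leftUnitor_naturality {X Y : D} (f : X ⟶ Y) :
    H.whiskerLeft (α.obj (𝟙_ C)) f ≫ (H.leftUnitor Y).hom = (H.leftUnitor X).hom ≫ f := by
  obtain ⟨x, rfl⟩ := H.bijective_obj.2 X
  obtain ⟨y, rfl⟩ := H.bijective_obj.2 Y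
  obtain ⟨u, u', rfl⟩ := H.exists_eq_map_sub_map f
  simp only [α.map_eq_mapOfEq, H.whiskerLeft_sub, H.whiskerLeft_mapOfEq rfl, H.leftUnitor_eq rfl,
    Functor.mapIsoOfEq_hom, Preadditive.sub_comp, Preadditive.comp_sub, Functor.mapOfEq_comp,
    MonoidalCategory.leftUnitor_naturality]

theorem rightUnitor_naturality {X Y : D} (f : X ⟶ Y) :
    H.whiskerRight f (α.obj (𝟙_ C)) ≫ (H.rightUnitor Y).hom = (H.rightUnitor X).hom ≫ f := by
  obtain ⟨x, rfl⟩ := H.bijective_obj.2 X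
  obtain ⟨y, rfl⟩ := H.bijective_obj.2 Y
  obtain ⟨u, u', rfl⟩ := H.exists_eq_map_sub_map f
  simp only [α.map_eq_mapOfEq, H.whiskerRight_sub, H.whiskerRight_mapOfEq rfl,
    H.rightUnitor_eq rfl, Functor.mapIsoOfEq_hom, Preadditive.sub_comp, Preadditive.comp_sub,
    Functor.mapOfEq_comp, MonoidalCategory.rightUnitor_naturality]

theorem associator_naturality_left {X X' : D} (f : X ⟶ X') (Y Z : D) :
    H.whiskerRight (H.whiskerRight f Y) Z ≫ (H.associator X' Y Z).hom =
      (H.associator X Y Z).hom ≫ H.whiskerRight f (H.tensorObj Y Z) := by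
  obtain ⟨x, rfl⟩ := H.bijective_obj.2 X
  obtain ⟨x', rfl⟩ := H.bijective_obj.2 X'
  obtain ⟨y, rfl⟩ := H.bijective_obj.2 Y
  obtain ⟨z, rfl⟩ := H.bijective_obj.2 Z
  obtain ⟨u, u', rfl⟩ := H.exists_eq_map_sub_map f
  simp only [α.map_eq_mapOfEq, H.whiskerRight_sub, H.whiskerRight_mapOfEq rfl,
    H.whiskerRight_mapOfEq (H.tensorObj_eq rfl rfl), H.associator_eq rfl rfl rfl,
    Functor.mapIsoOfEq_hom, Preadditive.sub_comp, Preadditive.comp_sub, Functor.mapOfEq_comp,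
    MonoidalCategory.associator_naturality_left]

theorem associator_naturality_middle (X : D) {Y Y' : D} (f : Y ⟶ Y') (Z : D) :
    H.whiskerRight (H.whiskerLeft X f) Z ≫ (H.associator X Y' Z).hom =
      (H.associator X Y Z).hom ≫ H.whiskerLeft X (H.whiskerRight f Z) := by
  obtain ⟨x, rfl⟩ := H.bijective_obj.2 X
  obtain ⟨y, rfl⟩ := H.bijective_obj.2 Y
  obtain ⟨y', rfl⟩ := H.bijective_obj.2 Y'
  obtain ⟨z, rfl⟩ := H.bijective_obj.2 Z
  obtain ⟨u, u', rfl⟩ := H.exists_eq_map_sub_map f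
  simp only [α.map_eq_mapOfEq, H.whiskerRight_sub, H.whiskerLeft_sub, H.whiskerRight_mapOfEq rfl,
    H.whiskerLeft_mapOfEq rfl, H.associator_eq rfl rfl rfl, Functor.mapIsoOfEq_hom,
    Preadditive.sub_comp, Preadditive.comp_sub, Functor.mapOfEq_comp,
    MonoidalCategory.associator_naturality_middle]

theorem associator_naturality_right (X Y : D) {Z Z' : D} (f : Z ⟶ Z') :
    H.whiskerLeft (H.tensorObj X Y) f ≫ (H.associator X Y Z').hom =
      (H.associator X Y Z).hom ≫ H.whiskerLeft X (H.whiskerLeft Y f) := by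
  obtain ⟨x, rfl⟩ := H.bijective_obj.2 X
  obtain ⟨y, rfl⟩ := H.bijective_obj.2 Y
  obtain ⟨z, rfl⟩ := H.bijective_obj.2 Z
  obtain ⟨z', rfl⟩ := H.bijective_obj.2 Z'
  obtain ⟨u, u', rfl⟩ := H.exists_eq_map_sub_map f
  simp only [α.map_eq_mapOfEq, H.whiskerLeft_sub, H.whiskerLeft_mapOfEq rfl,
    H.whiskerLeft_mapOfEq (H.tensorObj_eq rfl rfl), H.associator_eq rfl rfl rfl,
    Functor.mapIsoOfEq_hom, Preadditive.sub_comp, Preadditive.comp_sub, Functor.mapOfEq_comp,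
    MonoidalCategory.associator_naturality_right]

theorem pentagon (W X Y Z : D) :
    H.whiskerRight (H.associator W X Y).hom Z ≫ (H.associator W (H.tensorObj X Y) Z).hom ≫
        H.whiskerLeft W (H.associator X Y Z).hom =
      (H.associator (H.tensorObj W X) Y Z).hom ≫ (H.associator W X (H.tensorObj Y Z)).hom := by
  obtain ⟨w, rfl⟩ := H.bijective_obj.2 W
  obtain ⟨x, rfl⟩ := H.bijective_obj.2 X
  obtain ⟨y, rfl⟩ := H.bijective_obj.2 Y
  obtain ⟨z, rfl⟩ := H.bijective_obj.2 Z
  simp only [H.associator_eq rfl rfl rfl, H.associator_eq (H.tensorObj_eq rfl rfl) rfl rfl,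
    H.associator_eq rfl (H.tensorObj_eq rfl rfl) rfl,
    H.associator_eq rfl rfl (H.tensorObj_eq rfl rfl),
    Functor.mapIsoOfEq_hom, H.whiskerRight_mapOfEq rfl, H.whiskerLeft_mapOfEq rfl,
    Functor.mapOfEq_comp, MonoidalCategory.pentagon]

theorem triangle (X Y : D) :
    (H.associator X (α.obj (𝟙_ C)) Y).hom ≫ H.whiskerLeft X (H.leftUnitor Y).hom =
      H.whiskerRight (H.rightUnitor X).hom Y := by
  obtain ⟨x, rfl⟩ := H.bijective_obj.2 X
  obtain ⟨y, rfl⟩ := H.bijective_obj.2 Y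
  simp only [H.associator_eq rfl rfl rfl, H.leftUnitor_eq rfl, H.rightUnitor_eq rfl,
    Functor.mapIsoOfEq_hom, H.whiskerLeft_mapOfEq rfl, H.whiskerRight_mapOfEq rfl,
    Functor.mapOfEq_comp, MonoidalCategory.triangle]

noncomputable def monoidalCategory : MonoidalCategory D where
  tensorObj := H.tensorObj
  whiskerLeft := H.whiskerLeft
  whiskerRight := H.whiskerRight
  tensorUnit := α.obj (𝟙_ C)
  associator := H.associator
  leftUnitor := H.leftUnitor
  rightUnitor := H.rightUnitor
  whiskerLeft_id := H.whiskerLeft_id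
  id_whiskerRight := H.id_whiskerRight
  id_tensorHom_id X Y := by
    dsimp only
    rw [H.id_whiskerRight, H.whiskerLeft_id, Category.comp_id]
  tensorHom_comp_tensorHom f₁ f₂ g₁ g₂ := by
    dsimp only
    rw [H.comp_whiskerRight, H.whiskerLeft_comp]
    simp only [Category.assoc, ← reassoc_of% H.whisker_exchange]
  associator_naturality f₁ f₂ f₃ := by
    dsimp only
    simp only [H.comp_whiskerRight, H.whiskerLeft_comp, Category.assoc,
      H.associator_naturality_right, reassoc_of% H.associator_naturality_middle,
      reassoc_of% H.associator_naturality_left]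
  leftUnitor_naturality := H.leftUnitor_naturality
  rightUnitor_naturality := H.rightUnitor_naturality
  pentagon := H.pentagon
  triangle := H.triangle

theorem map_tensorHom {x y x' y' : C} (f : x ⟶ x') (g : y ⟶ y') :
    α.map (f ⊗ₘ g) = eqToHom (H.map_tensorObj x y) ≫
      (H.whiskerRight (α.map f) (α.obj y) ≫ H.whiskerLeft (α.obj x') (α.map g)) ≫
        eqToHom (H.map_tensorObj x' y').symm := by
  simp only [α.map_eq_mapOfEq, H.whiskerRight_mapOfEq rfl, H.whiskerLeft_mapOfEq rfl,
    Functor.mapOfEq_comp, ← MonoidalCategory.tensorHom_def, Functor.eqToHom_comp_mapOfEq,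
    Functor.mapOfEq_comp_eqToHom]

section Braided

variable [BraidedCategory C]

theorem braiding_naturality_right (X : D) {Y Z : D} (f : Y ⟶ Z) :
    H.whiskerLeft X f ≫ (H.braiding X Z).hom = (H.braiding X Y).hom ≫ H.whiskerRight f X := by
  obtain ⟨x, rfl⟩ := H.bijective_obj.2 X
  obtain ⟨y, rfl⟩ := H.bijective_obj.2 Y
  obtain ⟨z, rfl⟩ := H.bijective_obj.2 Z
  obtain ⟨u, u', rfl⟩ := H.exists_eq_map_sub_map f
  simp only [α.map_eq_mapOfEq, H.whiskerLeft_sub, H.whiskerRight_sub, H.whiskerLeft_mapOfEq rfl,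
    H.whiskerRight_mapOfEq rfl, H.braiding_eq rfl rfl, Functor.mapIsoOfEq_hom,
    Preadditive.sub_comp, Preadditive.comp_sub, Functor.mapOfEq_comp,
    BraidedCategory.braiding_naturality_right]

theorem braiding_naturality_left {X Y : D} (f : X ⟶ Y) (Z : D) :
    H.whiskerRight f Z ≫ (H.braiding Y Z).hom = (H.braiding X Z).hom ≫ H.whiskerLeft Z f := by
  obtain ⟨x, rfl⟩ := H.bijective_obj.2 X
  obtain ⟨y, rfl⟩ := H.bijective_obj.2 Y
  obtain ⟨z, rfl⟩ := H.bijective_obj.2 Z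
  obtain ⟨u, u', rfl⟩ := H.exists_eq_map_sub_map f
  simp only [α.map_eq_mapOfEq, H.whiskerLeft_sub, H.whiskerRight_sub, H.whiskerLeft_mapOfEq rfl,
    H.whiskerRight_mapOfEq rfl, H.braiding_eq rfl rfl, Functor.mapIsoOfEq_hom,
    Preadditive.sub_comp, Preadditive.comp_sub, Functor.mapOfEq_comp,
    BraidedCategory.braiding_naturality_left]

theorem hexagon_forward (X Y Z : D) :
    (H.associator X Y Z).hom ≫ (H.braiding X (H.tensorObj Y Z)).hom ≫ (H.associator Y Z X).hom =
      H.whiskerRight (H.braiding X Y).hom Z ≫ (H.associator Y X Z).hom ≫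
        H.whiskerLeft Y (H.braiding X Z).hom := by
  obtain ⟨x, rfl⟩ := H.bijective_obj.2 X
  obtain ⟨y, rfl⟩ := H.bijective_obj.2 Y
  obtain ⟨z, rfl⟩ := H.bijective_obj.2 Z
  simp only [H.associator_eq rfl rfl rfl, H.braiding_eq rfl (H.tensorObj_eq rfl rfl),
    H.braiding_eq rfl rfl, Functor.mapIsoOfEq_hom, H.whiskerRight_mapOfEq rfl,
    H.whiskerLeft_mapOfEq rfl, Functor.mapOfEq_comp, BraidedCategory.hexagon_forward]

theorem hexagon_reverse (X Y Z : D) :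
    (H.associator X Y Z).inv ≫ (H.braiding (H.tensorObj X Y) Z).hom ≫ (H.associator Z X Y).inv =
      H.whiskerLeft X (H.braiding Y Z).hom ≫ (H.associator X Z Y).inv ≫
        H.whiskerRight (H.braiding X Z).hom Y := by
  obtain ⟨x, rfl⟩ := H.bijective_obj.2 X
  obtain ⟨y, rfl⟩ := H.bijective_obj.2 Y
  obtain ⟨z, rfl⟩ := H.bijective_obj.2 Z
  simp only [H.associator_eq rfl rfl rfl, H.braiding_eq (H.tensorObj_eq rfl rfl) rfl,
    H.braiding_eq rfl rfl, Functor.mapIsoOfEq_hom, Functor.mapIsoOfEq_inv,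
    H.whiskerRight_mapOfEq rfl, H.whiskerLeft_mapOfEq rfl, Functor.mapOfEq_comp,
    BraidedCategory.hexagon_reverse]

noncomputable def braidedCategory : @BraidedCategory D _ H.monoidalCategory :=
  letI := H.monoidalCategory
  { braiding := H.braiding
    braiding_naturality_right := H.braiding_naturality_right
    braiding_naturality_left := H.braiding_naturality_left
    hexagon_forward := H.hexagon_forward
    hexagon_reverse := H.hexagon_reverse }

end Braided

section Symmetric

variable [SymmetricCategory C]

noncomputable def symmetricCategory : @SymmetricCategory D _ H.monoidalCategory :=
  letI := H.monoidalCategory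
  { H.braidedCategory with symmetry := H.braiding_hom_comp_braiding_hom }

theorem eq_symmetricCategory (S : @SymmetricCategory D _ H.monoidalCategory)
    (hbraid : letI := H.monoidalCategory; ∀ x y : C, α.map (β_ x y).hom =
      eqToHom (H.map_tensorObj x y) ≫ (β_ (α.obj x) (α.obj y)).hom ≫
        eqToHom (H.map_tensorObj y x).symm) :
    S = H.symmetricCategory := by
  refine @SymmetricCategory.ext_of_braiding_hom _ _ H.monoidalCategory _ _ fun X Y => ?_
  obtain ⟨x, rfl⟩ := H.bijective_obj.2 X
  obtain ⟨y, rfl⟩ := H.bijective_obj.2 Y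
  have h := (hbraid x y).symm.trans (H.map_braiding_hom x y)
  rw [cancel_epi] at h
  exact (cancel_mono (eqToHom (H.map_tensorObj y x).symm)).1 h

end Symmetric

section Uniqueness

variable [M : MonoidalCategory D]

theorem whiskerLeft_eq_of_map_tensorHom
    (hwl : ∀ (X : D) ⦃Y Z : D⦄ (f g : Y ⟶ Z), X ◁ (f + g) = X ◁ f + X ◁ g)
    (hto : ∀ x y : C, α.obj (x ⊗ y) = α.obj x ⊗ α.obj y)
    (htensor : ∀ {x y x' y' : C} (f : x ⟶ x') (g : y ⟶ y'),
      α.map (f ⊗ₘ g) = eqToHom (hto x y) ≫ (α.map f ⊗ₘ α.map g) ≫ eqToHom (hto x' y').symm)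
    (X : D) {Y Z : D} (g : Y ⟶ Z) :
    X ◁ g = eqToHom (H.tensorObj_eq_of_map_tensorObj hto X Y) ≫ H.whiskerLeft X g ≫
      eqToHom (H.tensorObj_eq_of_map_tensorObj hto X Z).symm := by
  obtain ⟨x, rfl⟩ := H.bijective_obj.2 X
  obtain ⟨y, rfl⟩ := H.bijective_obj.2 Y
  obtain ⟨z, rfl⟩ := H.bijective_obj.2 Z
  obtain ⟨u, u', rfl⟩ := H.exists_eq_map_sub_map g
  have map_whiskerLeft (f : y ⟶ z) :
      α.obj x ◁ α.map f = α.mapOfEq (hto x y).symm (hto x z).symm (x ◁ f) := by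
    have h := htensor (𝟙 x) f
    rw [α.map_id, MonoidalCategory.id_tensorHom, MonoidalCategory.id_tensorHom] at h
    simp [Functor.mapOfEq, h]
  have whiskerLeft_sub : α.obj x ◁ (α.map u - α.map u') =
      α.obj x ◁ α.map u - α.obj x ◁ α.map u' :=
    (AddMonoidHom.mk' (α.obj x ◁ ·) (hwl (α.obj x) · ·)).map_sub _ _
  rw [whiskerLeft_sub, map_whiskerLeft, map_whiskerLeft]
  simp only [H.whiskerLeft_sub, α.map_eq_mapOfEq, H.whiskerLeft_mapOfEq rfl, Preadditive.comp_sub,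
    Preadditive.sub_comp, Functor.eqToHom_comp_mapOfEq, Functor.mapOfEq_comp_eqToHom]

theorem whiskerRight_eq_of_map_tensorHom
    (hwr : ∀ ⦃Y Z : D⦄ (f g : Y ⟶ Z) (X : D), (f + g) ▷ X = f ▷ X + g ▷ X)
    (hto : ∀ x y : C, α.obj (x ⊗ y) = α.obj x ⊗ α.obj y)
    (htensor : ∀ {x y x' y' : C} (f : x ⟶ x') (g : y ⟶ y'),
      α.map (f ⊗ₘ g) = eqToHom (hto x y) ≫ (α.map f ⊗ₘ α.map g) ≫ eqToHom (hto x' y').symm)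
    {Y Z : D} (g : Y ⟶ Z) (X : D) :
    g ▷ X = eqToHom (H.tensorObj_eq_of_map_tensorObj hto Y X) ≫ H.whiskerRight g X ≫
      eqToHom (H.tensorObj_eq_of_map_tensorObj hto Z X).symm := by
  obtain ⟨x, rfl⟩ := H.bijective_obj.2 X
  obtain ⟨y, rfl⟩ := H.bijective_obj.2 Y
  obtain ⟨z, rfl⟩ := H.bijective_obj.2 Z
  obtain ⟨u, u', rfl⟩ := H.exists_eq_map_sub_map g
  have map_whiskerRight (f : y ⟶ z) :
      α.map f ▷ α.obj x = α.mapOfEq (hto y x).symm (hto z x).symm (f ▷ x) := by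
    have h := htensor f (𝟙 x)
    rw [α.map_id, MonoidalCategory.tensorHom_id, MonoidalCategory.tensorHom_id] at h
    simp [Functor.mapOfEq, h]
  have sub_whiskerRight : (α.map u - α.map u') ▷ α.obj x =
      α.map u ▷ α.obj x - α.map u' ▷ α.obj x :=
    (AddMonoidHom.mk' (· ▷ α.obj x) (hwr · · (α.obj x))).map_sub _ _
  rw [sub_whiskerRight, map_whiskerRight, map_whiskerRight]
  simp only [H.whiskerRight_sub, α.map_eq_mapOfEq, H.whiskerRight_mapOfEq rfl,
    Preadditive.comp_sub, Preadditive.sub_comp, Functor.eqToHom_comp_mapOfEq,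
    Functor.mapOfEq_comp_eqToHom]

theorem eq_monoidalCategory
    (hwl : ∀ (X : D) ⦃Y Z : D⦄ (f g : Y ⟶ Z), X ◁ (f + g) = X ◁ f + X ◁ g)
    (hwr : ∀ ⦃Y Z : D⦄ (f g : Y ⟶ Z) (X : D), (f + g) ▷ X = f ▷ X + g ▷ X)
    (hto : ∀ x y : C, α.obj (x ⊗ y) = α.obj x ⊗ α.obj y) (hunit : α.obj (𝟙_ C) = 𝟙_ D)
    (htensor : ∀ {x y x' y' : C} (f : x ⟶ x') (g : y ⟶ y'),
      α.map (f ⊗ₘ g) = eqToHom (hto x y) ≫ (α.map f ⊗ₘ α.map g) ≫ eqToHom (hto x' y').symm)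
    (hassoc : ∀ x y z : C, α.map (α_ x y z).hom =
      eqToHom (by rw [hto, hto]) ≫ (α_ (α.obj x) (α.obj y) (α.obj z)).hom ≫
        eqToHom (by rw [hto, hto]))
    (hleft : ∀ x : C, α.map (λ_ x).hom = eqToHom (by rw [hto, hunit]) ≫ (λ_ (α.obj x)).hom)
    (hright : ∀ x : C, α.map (ρ_ x).hom = eqToHom (by rw [hto, hunit]) ≫ (ρ_ (α.obj x)).hom) :
    M = H.monoidalCategory :=
  MonoidalCategory.ext_of_eqToHom (H.tensorObj_eq_of_map_tensorObj hto)
    (H.whiskerLeft_eq_of_map_tensorHom hwl hto htensor)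
    (H.whiskerRight_eq_of_map_tensorHom hwr hto htensor) hunit.symm
    (H.associator_hom_eq_of_map_associator_hom hto hassoc)
    (H.leftUnitor_hom_eq_of_map_leftUnitor_hom hto hunit hleft)
    (H.rightUnitor_hom_eq_of_map_rightUnitor_hom hto hunit hright)

end Uniqueness

end Monoidal

end IsGroupCompletion

end CategoryTheory

/-- If a semi-additive category `C` carries a symmetric monoidal structure whose tensor
product is additive in each variable, and `α : C ⥤ D` exhibits the preadditive category `D`
as the group completion of `C` (bijective on objects, additive, with every Hom-group of `D`
the Grothendieck group completion of the corresponding Hom-monoid of `C`), then `D` carries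
a unique symmetric monoidal structure which is additive in each variable and for which `α`
is strict symmetric monoidal. -/
theorem groupCompletion_symmetric_monoidal
    {C : Type u} [Category.{v} C] [CMonEnriched C]
    [MonoidalCategory C] [SymmetricCategory C]
    (hwl : ∀ (x : C) ⦃y z : C⦄ (f g : y ⟶ z), x ◁ (f + g) = x ◁ f + x ◁ g)
    (hwr : ∀ ⦃y z : C⦄ (f g : y ⟶ z) (x : C), (f + g) ▷ x = f ▷ x + g ▷ x)
    {D : Type u'} [Category.{v'} D] [Preadditive D]
    (α : C ⥤ D) (hobj : Function.Bijective α.obj)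
    (hadd : ∀ {x y : C} (f g : x ⟶ y), α.map (f + g) = α.map f + α.map g)
    (hsurj : ∀ {x y : C} (g : α.obj x ⟶ α.obj y), ∃ f f' : x ⟶ y, g = α.map f - α.map f')
    (hker : ∀ {x y : C} (f f' : x ⟶ y), α.map f = α.map f' ↔ ∃ h : x ⟶ y, f + h = f' + h) :
    ∃! MS : (M : MonoidalCategory D) × @SymmetricCategory D _ M,
      letI := MS.1; letI := MS.2
      -- the tensor product of `D` is additive in each variable
      ((∀ (x : D) ⦃y z : D⦄ (f g : y ⟶ z), x ◁ (f + g) = x ◁ f + x ◁ g) ∧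
       (∀ ⦃y z : D⦄ (f g : y ⟶ z) (x : D), (f + g) ▷ x = f ▷ x + g ▷ x)) ∧
      -- `α` is strict symmetric monoidal
      ∃ (hto : ∀ x y : C, α.obj (x ⊗ y) = α.obj x ⊗ α.obj y)
        (hunit : α.obj (𝟙_ C) = 𝟙_ D),
        (∀ {x y x' y' : C} (f : x ⟶ x') (g : y ⟶ y'),
          α.map (f ⊗ₘ g) =
            eqToHom (hto x y) ≫ (α.map f ⊗ₘ α.map g) ≫ eqToHom (hto x' y').symm) ∧
        (∀ x y : C, α.map (β_ x y).hom =
            eqToHom (hto x y) ≫ (β_ (α.obj x) (α.obj y)).hom ≫ eqToHom (hto y x).symm) ∧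
        (∀ x y z : C, α.map (α_ x y z).hom =
            eqToHom (by rw [hto, hto]) ≫ (α_ (α.obj x) (α.obj y) (α.obj z)).hom ≫
              eqToHom (by rw [hto, hto])) ∧
        (∀ x : C, α.map (λ_ x).hom = eqToHom (by rw [hto, hunit]) ≫ (λ_ (α.obj x)).hom) ∧
        (∀ x : C, α.map (ρ_ x).hom = eqToHom (by rw [hto, hunit]) ≫ (ρ_ (α.obj x)).hom) := by
  have : MonoidalCMonEnriched C := ⟨fun x _ _ f g => hwl x f g, fun f g x => hwr f g x⟩
  have H : IsGroupCompletion α := ⟨hobj, hadd, hsurj, hker⟩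
  refine ⟨⟨H.monoidalCategory, H.symmetricCategory⟩,
    ⟨⟨fun X _ _ => H.whiskerLeft_add X, fun _ _ => H.whiskerRight_add⟩, H.map_tensorObj, rfl,
      H.map_tensorHom, H.map_braiding_hom, H.map_associator_hom, H.map_leftUnitor_hom,
      H.map_rightUnitor_hom⟩, ?_⟩
  rintro ⟨M, S⟩ ⟨⟨hwl', hwr'⟩, hto, hunit, htensor, hbraid, hassoc, hleft, hright⟩
  obtain rfl := H.eq_monoidalCategory hwl' hwr' hto hunit htensor hassoc hleft hright
  obtain rfl := H.eq_symmetricCategory S hbraid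
  rfl
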